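/- arXiv:2112.11631 — 6 statements merged into one kernel-verified Lean document; each statement's English description precedes it below -/
import Mathlib

section
/- Let k be a field, A a unital associative k-algebra, d : A → A a k-linear map, and a ∈ k. Then the following two conditions on (A, d) are equivalent: (i) for all x, y ∈ A, d(xy) = x·d(y) + a•(x·d(1)·y − d(1)·x·y); (ii) for all x ∈ A, d(x) = (a+1)•(x·d(1)) − a•(d(1)·x). (This is the equivalence of the differential type OPI (U3) with the one-variable OPI ⌊x⌋ + λ·x⌊1⌋ − (λ+1)·⌊1⌋x for λ = −(a+1).) -/
/-- Equivalence of the differential type OPI (U3) with the one-variable OPI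
`⌊x⌋ + λ x⌊1⌋ − (λ+1) ⌊1⌋x` for `λ = −(a+1)`. -/
theorem opi_U3_equiv_one_variable {k A : Type*} [Field k] [Ring A] [Algebra k A]
    (d : A →ₗ[k] A) (a : k) :
    (∀ x y : A, d (x * y) = x * d y + a • (x * d 1 * y - d 1 * x * y)) ↔
      (∀ x : A, d x = (a + 1) • (x * d 1) - a • (d 1 * x)) := by
  constructor
  · intro h x
    have := h x 1
    simp only [mul_one] at this
    rw [this]
    simp [add_smul, smul_sub]
    abel
  · intro h x y
    rw [h (x * y), h y]
    simp only [mul_sub, mul_add, smul_sub, smul_add, mul_smul_comm, add_smul, one_smul,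
      mul_assoc]
    abel
end

section
/- Let k be a field, A a unital associative k-algebra, d : A → A a k-linear map, and a ∈ k. Then the following two conditions on (A, d) are equivalent: (i) for all x, y ∈ A, d(xy) = d(x)·y + a•(x·d(1)·y − x·y·d(1)); (ii) for all x ∈ A, d(x) = −a•(x·d(1)) + (a+1)•(d(1)·x). (This is the equivalence of the differential type OPI (U4) with the one-variable OPI (U4'): ⌊x⌋ + a·x⌊1⌋ − (a+1)·⌊1⌋x.) -/
/-- Equivalence of the differential type OPI (U4) with the one-variable OPI
(U4'): `⌊x⌋ + a x⌊1⌋ − (a+1) ⌊1⌋x`. -/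
theorem opi_U4_equiv_U4' {k A : Type*} [Field k] [Ring A] [Algebra k A]
    (d : A →ₗ[k] A) (a : k) :
    (∀ x y : A, d (x * y) = d x * y + a • (x * d 1 * y - x * y * d 1)) ↔
      (∀ x : A, d x = -a • (x * d 1) + (a + 1) • (d 1 * x)) := by
  constructor
  · intro h x
    have := h 1 x
    simp only [one_mul] at this
    rw [this]
    simp [smul_sub, add_smul, neg_smul, one_smul]
    abel
  · intro h x y
    rw [h (x * y), h x]
    simp only [smul_sub, add_smul, neg_smul, one_smul, add_mul, smul_mul_assoc,
      neg_mul, mul_assoc]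
    abel
end

section
/- Let k be a field, A a unital associative k-algebra, and d : A → A a k-linear map. Let a, b ∈ k with a ≠ −1, and set λ = −b/(a+1). Then the following two conditions on (A, d) are equivalent: (i) for all x, y ∈ A, d(xy) = x·d(y) + d(x)·y + a•(x·d(1)·y) + b•(xy); (ii) for all x, y ∈ A, x·d(y) = d(xy) − d(x)·y + λ•(xy). (This is the equivalence of the differential type OPI (U5) with a ≠ −1 and the OPI (U5'_a).) -/
/-- Equivalence of the differential type OPI (U5) with `a ≠ −1` and the OPI (U5'_a). -/
theorem opi_U5_equiv_U5'a {k A : Type*} [Field k] [Ring A] [Algebra k A]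
    (d : A →ₗ[k] A) (a b : k) (ha : a ≠ -1) (lam : k) (hlam : lam = -b / (a + 1)) :
    (∀ x y : A, d (x * y) = x * d y + d x * y + a • (x * d 1 * y) + b • (x * y)) ↔
      (∀ x y : A, x * d y = d (x * y) - d x * y + lam • (x * y)) := by
  have ha1 : a + 1 ≠ 0 := by
    intro h; exact ha (by linear_combination h)
  have hkey : (a + 1) * lam = -b := by
    rw [hlam]; field_simp
  constructor
  · intro H
    have h1 : d 1 = lam • (1 : A) := by
      have h0 := H 1 1
      simp only [one_mul, mul_one] at h0
      have h2 : d 1 + a • d 1 + b • 1 = 0 := by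
        have h0' : d 1 + (d 1 + a • d 1 + b • 1) = d 1 + 0 :=
          calc d 1 + (d 1 + a • d 1 + b • 1) = d 1 + d 1 + a • d 1 + b • 1 := by abel
            _ = d 1 := h0.symm
            _ = d 1 + 0 := (add_zero _).symm
        exact add_left_cancel h0'
      have h3 : (a + 1) • d 1 = (-b) • (1 : A) := by
        rw [add_smul, one_smul, neg_smul, eq_neg_iff_add_eq_zero]
        calc a • d 1 + d 1 + b • 1 = d 1 + a • d 1 + b • 1 := by abel
          _ = 0 := h2
      have h4 : d 1 = ((a + 1)⁻¹ * (-b)) • (1 : A) := by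
        have := congrArg (fun z => (a + 1)⁻¹ • z) h3
        simpa [smul_smul, inv_mul_cancel₀ ha1] using this
      rw [h4, hlam]
      congr 1
      field_simp
    intro x y
    have hH := H x y
    rw [h1] at hH
    have hs : x * (lam • (1 : A)) * y = lam • (x * y) := by
      rw [mul_smul_comm, smul_mul_assoc, mul_one]
    rw [hs] at hH
    rw [hH]
    have hcomb : a • (lam • (x * y)) + b • (x * y) = (-lam) • (x * y) := by
      rw [smul_smul, ← add_smul]
      congr 1
      linear_combination hkey
    rw [show x * d y + d x * y + a • (lam • (x * y)) + b • (x * y)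
        = x * d y + d x * y + (a • (lam • (x * y)) + b • (x * y)) by abel,
      hcomb, neg_smul]
    abel
  · intro H
    have h1 : d 1 = lam • (1 : A) := by
      have := H 1 1
      simpa using this
    intro x y
    have hH := H x y
    rw [hH, h1]
    have hs : x * (lam • (1 : A)) * y = lam • (x * y) := by
      rw [mul_smul_comm, smul_mul_assoc, mul_one]
    rw [hs]
    have hcomb : a • (lam • (x * y)) + b • (x * y) = (-lam) • (x * y) := by
      rw [smul_smul, ← add_smul]
      congr 1
      linear_combination hkey
    rw [show d (x * y) - d x * y + lam • (x * y) + d x * y + a • (lam • (x * y)) + b • (x * y)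
        = d (x * y) + lam • (x * y) + (a • (lam • (x * y)) + b • (x * y)) by abel,
      hcomb, neg_smul]
    abel
end

section
/- Let k be a field, A a unital associative k-algebra, and d : A → A a k-linear map. Let λ₁₀, λ₀₁, λ₀₀ ∈ k with λ₁₀ + λ₀₁ ≠ 1, and set λ = λ₀₀/(1 − λ₁₀ − λ₀₁). Then d satisfies d(xy) = λ₁₀•(d(1)·x·y) + λ₀₁•(x·y·d(1)) + λ₀₀•(xy) for all x, y ∈ A if and only if d(x) = λ•x for all x ∈ A. (This is the equivalence of the differential type OPI (U6), with λ_ij = 0 unless i + j ≤ 1 and λ₁₀ + λ₀₁ ≠ 1, and the OPI (U6'_b): ⌊x⌋ − λx.) -/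
/-- Equivalence of the differential type OPI (U6) (with `λ_ij = 0` unless
`i + j ≤ 1` and `λ₁₀ + λ₀₁ ≠ 1`) and the OPI (U6'_b): `⌊x⌋ − λx`. -/
theorem opi_U6_equiv_U6'b {k A : Type*} [Field k] [Ring A] [Algebra k A]
    (d : A →ₗ[k] A) (l10 l01 l00 : k) (h : l10 + l01 ≠ 1)
    (lam : k) (hlam : lam = l00 / (1 - l10 - l01)) :
    (∀ x y : A, d (x * y) =
        l10 • (d 1 * x * y) + l01 • (x * y * d 1) + l00 • (x * y)) ↔
      (∀ x : A, d x = lam • x) := by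
  have hne : (1 : k) - l10 - l01 ≠ 0 := by
    intro hc
    apply h
    linear_combination -hc
  have key : lam * (1 - l10 - l01) = l00 := by
    rw [hlam, div_mul_cancel₀ _ hne]
  constructor
  · intro H x
    have h1 : d 1 = lam • (1 : A) := by
      have := H 1 1
      simp only [mul_one, one_mul] at this
      have h2 : (1 - l10 - l01) • d 1 = l00 • (1 : A) := by
        rw [sub_smul, sub_smul, one_smul, sub_sub, ← add_smul, sub_eq_iff_eq_add]
        nth_rewrite 1 [this]
        rw [add_smul]; abel
      rw [← key, mul_comm, mul_smul] at h2
      exact smul_right_injective A hne h2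
    have := H x 1
    simp only [mul_one, h1] at this
    rw [this]
    rw [smul_mul_assoc, mul_smul_comm, mul_one, one_mul, smul_smul, smul_smul,
      ← add_smul, ← add_smul]
    congr 1
    linear_combination -key
  · intro H x y
    rw [H (x * y), H 1, smul_mul_assoc, smul_mul_assoc, mul_smul_comm, one_mul,
      mul_one, smul_smul, smul_smul, ← add_smul, ← add_smul]
    congr 1
    linear_combination key
end

section
/- Let k be a field, A a unital associative k-algebra, and d : A → A a k-linear map. Let λ₁₀, λ₀₁, λ₀₀ ∈ k with λ₁₀ + λ₀₁ = 1 and λ₀₀ ≠ 0. Then d satisfies d(xy) = λ₁₀•(d(1)·x·y) + λ₀₁•(x·y·d(1)) + λ₀₀•(xy) for all x, y ∈ A if and only if every element of A equals 0 (i.e., A is the zero algebra). (This is the case λ₁₀ + λ₀₁ = 1, λ₀₀ ≠ 0 of the differential type OPI (U6), which is equivalent to the OPI (U6'_c): x.) -/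
/-- The case `λ₁₀ + λ₀₁ = 1`, `λ₀₀ ≠ 0` of the differential type OPI (U6) is
equivalent to the OPI (U6'_c): `x`, i.e. forces `A` to be the zero algebra. -/
theorem opi_U6_equiv_U6'c {k A : Type*} [Field k] [Ring A] [Algebra k A]
    (d : A →ₗ[k] A) (l10 l01 l00 : k) (h1 : l10 + l01 = 1) (h0 : l00 ≠ 0) :
    (∀ x y : A, d (x * y) =
        l10 • (d 1 * x * y) + l01 • (x * y * d 1) + l00 • (x * y)) ↔
      (∀ x : A, x = 0) := by
  constructor
  · intro h x
    have key := h 1 1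
    simp only [mul_one, one_mul] at key
    have h2 : (l10 + l01) • d 1 + l00 • (1 : A) = d 1 := by
      rw [add_smul]; linear_combination (norm := module) -key
    rw [h1, one_smul] at h2
    have h3 : l00 • (1 : A) = 0 :=
      add_left_cancel (a := d 1) (by rw [h2, add_zero])
    have h4 : (1 : A) = 0 := by
      have := congrArg (fun z => l00⁻¹ • z) h3
      simpa [smul_smul, inv_mul_cancel₀ h0] using this
    calc x = x * 1 := (mul_one x).symm
      _ = 0 := by rw [h4, mul_zero]
  · intro h x y
    rw [h (d (x*y)), h (x*y)]
    simp [h (d 1)]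
end

section
/- Let k be a field, V a k-vector space, and b : ι → V a basis of V indexed by a well-ordered type ι (a linear order on ι in which every nonempty subset has a least element; for the statement, a linear order suffices since supports are finite). For a nonzero v ∈ V, the leading index of v is the maximum element of the (finite, nonempty) support of the coordinate representation of v in the basis b, and the leading coefficient of v is the coordinate of v at its leading index. A subset S ⊆ V is linearly self-reduced (with respect to b) if 0 ∉ S, every s ∈ S has leading coefficient 1, and for every s ∈ S, no index in the support of s is the leading index of any element of S other than s. Then: every finite-dimensional linear subspace W of V has exactly one linearly self-reduced subset S such that S spans W and S is linearly independent (i.e., S is a basis of W). -/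
/-!
Let `L` be the set of indices occurring as leading index of a vector of `W`. Vectors with pairwise
distinct leading indices are linearly independent, since the largest leading index among the terms
of a nonzero combination survives as its leading index; so `L` is finite with `|L| ≤ dim W`. The
restriction of coordinates to `L` is injective on `W`, as a nonzero vector has a nonzero coordinate
at its leading index. Hence `W ≃ k^L`, and the preimages of the standard basis vectors form a
linearly self-reduced basis of `W` (a "reduced row echelon form" with pivot set `L`).

For uniqueness, the leading index of a nonzero vector in the span of a self-reduced set `S` is the
leading index of an element of `S`. If `S` and `T` span the same space and `s ∈ S`, take `t ∈ T`
with the same leading index `i`. If `s ≠ t`, the leading index `j` of `s - t` is that of an element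
of `S` and of an element of `T`, and it lies in the support of `s` or of `t`; self-reducedness then
forces `j = i`, but the coordinate of `s - t` at `i` is `1 - 1 = 0`.
-/

/-- `i` is the leading index of `v` with respect to the basis `b`: `i` lies in
the support of the coordinate representation of `v` and is the largest such index. -/
def IsLeadIdx {k V ι : Type*} [Field k] [AddCommGroup V] [Module k V]
    [LinearOrder ι] (b : Module.Basis ι k V) (v : V) (i : ι) : Prop :=
  i ∈ (b.repr v).support ∧ ∀ j ∈ (b.repr v).support, j ≤ i

/-- A subset `S` of `V` is linearly self-reduced with respect to the basis `b`:
`0 ∉ S`, every element of `S` has leading coefficient `1`, and no index in the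
support of an element `s ∈ S` is the leading index of any element of `S` other
than `s`. -/
def LinearlySelfReduced {k V ι : Type*} [Field k] [AddCommGroup V] [Module k V]
    [LinearOrder ι] (b : Module.Basis ι k V) (S : Set V) : Prop :=
  (0 : V) ∉ S ∧
    (∀ s ∈ S, ∀ i : ι, IsLeadIdx b s i → b.repr s i = 1) ∧
    (∀ s ∈ S, ∀ t ∈ S, t ≠ s → ∀ i ∈ (b.repr s).support, ¬ IsLeadIdx b t i)

open Function Module Submodule

section

variable {k V ι : Type*} [Field k] [AddCommGroup V] [Module k V] [LinearOrder ι]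
  {b : Basis ι k V}

theorem isLeadIdx_iff {v : V} {i : ι} :
    IsLeadIdx b v i ↔ b.repr v i ≠ 0 ∧ ∀ j, i < j → b.repr v j = 0 := by
  simp only [IsLeadIdx, Finsupp.mem_support_iff]
  refine and_congr_right fun _ => forall_congr' fun j => ?_
  rw [not_imp_comm, not_le]

namespace IsLeadIdx

variable {v : V} {i j : ι}

theorem repr_ne_zero (h : IsLeadIdx b v i) : b.repr v i ≠ 0 :=
  (isLeadIdx_iff.mp h).1

theorem repr_eq_zero_of_lt (h : IsLeadIdx b v i) (hij : i < j) : b.repr v j = 0 :=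
  (isLeadIdx_iff.mp h).2 j hij

theorem ne_zero (h : IsLeadIdx b v i) : v ≠ 0 := by
  rintro rfl
  exact h.repr_ne_zero (by simp)

theorem unique (hi : IsLeadIdx b v i) (hj : IsLeadIdx b v j) : i = j :=
  le_antisymm (hj.2 i hi.1) (hi.2 j hj.1)

end IsLeadIdx

theorem exists_isLeadIdx {v : V} (hv : v ≠ 0) : ∃ i, IsLeadIdx b v i := by
  have h : (b.repr v).support.Nonempty := by simpa using hv
  exact ⟨_, (b.repr v).support.max'_mem h, fun j hj => (b.repr v).support.le_max' j hj⟩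

section DistinctLeadIdx

variable {κ : Type*} {v : κ → V} {ℓ : κ → ι}

theorem exists_isLeadIdx_linearCombination (hℓ : Injective ℓ)
    (hv : ∀ a, IsLeadIdx b (v a) (ℓ a)) {c : κ →₀ k} (hc : c ≠ 0) :
    ∃ a ∈ c.support, IsLeadIdx b (Finsupp.linearCombination k v c) (ℓ a) := by
  obtain ⟨a, ha, hmax⟩ := c.support.exists_max_image ℓ (Finsupp.support_nonempty_iff.mpr hc)
  have hcoord : ∀ j, ℓ a ≤ j →
      b.repr (Finsupp.linearCombination k v c) j = c a * b.repr (v a) j := by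
    intro j hj
    rw [Finsupp.linearCombination_apply, Finsupp.sum, map_sum, Finsupp.finsetSum_apply,
      Finset.sum_eq_single_of_mem a ha, map_smul, Finsupp.smul_apply, smul_eq_mul]
    intro a' ha' hne
    have hlt : ℓ a' < ℓ a := (hmax a' ha').lt_of_ne (hℓ.ne hne)
    rw [map_smul, Finsupp.smul_apply, (hv a').repr_eq_zero_of_lt (hlt.trans_le hj), smul_zero]
  refine ⟨a, ha, isLeadIdx_iff.mpr ⟨?_, fun j hj => ?_⟩⟩
  · rw [hcoord _ le_rfl]
    exact mul_ne_zero (Finsupp.mem_support_iff.mp ha) (hv a).repr_ne_zero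
  · rw [hcoord j hj.le, (hv a).repr_eq_zero_of_lt hj, mul_zero]

theorem linearIndependent_of_isLeadIdx (hℓ : Injective ℓ)
    (hv : ∀ a, IsLeadIdx b (v a) (ℓ a)) : LinearIndependent k v := by
  refine linearIndependent_iff.mpr fun c hc => by_contra fun hc0 => ?_
  obtain ⟨a, -, ha⟩ := exists_isLeadIdx_linearCombination hℓ hv hc0
  exact ha.ne_zero hc

theorem exists_isLeadIdx_of_mem_span (hℓ : Injective ℓ)
    (hv : ∀ a, IsLeadIdx b (v a) (ℓ a)) {w : V} (hw : w ∈ span k (Set.range v))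
    (hw0 : w ≠ 0) : ∃ a, IsLeadIdx b w (ℓ a) := by
  obtain ⟨c, rfl⟩ := Finsupp.mem_span_range_iff_exists_finsupp.mp hw
  obtain ⟨a, -, ha⟩ := exists_isLeadIdx_linearCombination hℓ hv (c := c) (by
    rintro rfl
    simp at hw0)
  exact ⟨a, ha⟩

end DistinctLeadIdx

namespace LinearlySelfReduced

variable {S T : Set V} {s t : V} {i : ι}

theorem ne_zero (hS : LinearlySelfReduced b S) (hs : s ∈ S) : s ≠ 0 := by
  rintro rfl
  exact hS.1 hs

theorem repr_eq_one (hS : LinearlySelfReduced b S) (hs : s ∈ S) (hi : IsLeadIdx b s i) :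
    b.repr s i = 1 :=
  hS.2.1 s hs i hi

theorem eq_of_mem_support_of_isLeadIdx (hS : LinearlySelfReduced b S) (hs : s ∈ S)
    (ht : t ∈ S) (hi : i ∈ (b.repr s).support) (hti : IsLeadIdx b t i) : t = s :=
  by_contra fun hts => hS.2.2 s hs t ht hts i hi hti

theorem exists_injective_isLeadIdx (hS : LinearlySelfReduced b S) :
    ∃ ℓ : S → ι, Injective ℓ ∧ ∀ s : S, IsLeadIdx b s (ℓ s) := by
  choose ℓ hℓ using fun s : S => exists_isLeadIdx (b := b) (hS.ne_zero s.2)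
  refine ⟨ℓ, fun s t hst => Subtype.ext ?_, hℓ⟩
  exact hS.eq_of_mem_support_of_isLeadIdx t.2 s.2 (hst ▸ (hℓ t).1) (hℓ s)

theorem linearIndependent (hS : LinearlySelfReduced b S) :
    LinearIndependent k ((↑) : S → V) :=
  let ⟨_, hℓ, hv⟩ := hS.exists_injective_isLeadIdx
  linearIndependent_of_isLeadIdx hℓ hv

theorem exists_isLeadIdx_of_mem_span (hS : LinearlySelfReduced b S) {w : V}
    (hw : w ∈ span k S) (hw0 : w ≠ 0) : ∃ s ∈ S, ∃ i, IsLeadIdx b s i ∧ IsLeadIdx b w i := by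
  obtain ⟨ℓ, hℓ, hv⟩ := hS.exists_injective_isLeadIdx
  rw [← Subtype.range_coe (s := S)] at hw
  obtain ⟨s, hs⟩ := _root_.exists_isLeadIdx_of_mem_span hℓ hv hw hw0
  exact ⟨s, s.2, ℓ s, hv s, hs⟩

theorem subset_of_span_eq (hS : LinearlySelfReduced b S) (hT : LinearlySelfReduced b T)
    (h : span k S = span k T) : S ⊆ T := by
  intro s hs
  obtain ⟨t, ht, i, hti, hsi⟩ :=
    hT.exists_isLeadIdx_of_mem_span (h ▸ subset_span hs) (hS.ne_zero hs)
  by_contra hsT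
  have hu : s - t ∈ span k S := sub_mem (subset_span hs) (h ▸ subset_span ht)
  have hu0 : s - t ≠ 0 := sub_ne_zero.mpr fun hst => hsT (hst ▸ ht)
  obtain ⟨s', hs', j, hs'j, huj⟩ := hS.exists_isLeadIdx_of_mem_span hu hu0
  obtain ⟨t', ht', j', ht'j, huj'⟩ := hT.exists_isLeadIdx_of_mem_span (h ▸ hu) hu0
  obtain rfl := huj.unique huj'
  have hji : j = i := by
    have hj : j ∈ (b.repr s).support ∪ (b.repr t).support :=
      Finsupp.support_sub (by simpa only [map_sub] using huj.1)
    rcases Finset.mem_union.mp hj with hj | hj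
    · exact (hS.eq_of_mem_support_of_isLeadIdx hs hs' hj hs'j ▸ hs'j).unique hsi
    · exact (hT.eq_of_mem_support_of_isLeadIdx ht ht' hj ht'j ▸ ht'j).unique hti
  apply huj.repr_ne_zero
  rw [hji, map_sub, Finsupp.sub_apply, hS.repr_eq_one hs hsi, hT.repr_eq_one ht hti, sub_self]

end LinearlySelfReduced

section LeadIdxSet

variable (b) (W : Submodule k V)

def leadIdxSet : Set ι := {i | ∃ w ∈ W, IsLeadIdx b w i}

noncomputable def leadCoords : W →ₗ[k] leadIdxSet b W → k :=
  LinearMap.pi fun i => b.coord i ∘ₗ W.subtype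

variable {b W}

theorem leadCoords_apply (w : W) (i : leadIdxSet b W) : leadCoords b W w i = b.repr w i :=
  rfl

theorem leadCoords_injective : Injective (leadCoords b W) := by
  refine (injective_iff_map_eq_zero _).mpr fun w hw => by_contra fun hw0 => ?_
  obtain ⟨i, hi⟩ := exists_isLeadIdx (b := b) (Submodule.coe_eq_zero.not.mpr hw0)
  exact hi.repr_ne_zero (congr_fun hw ⟨i, w, w.2, hi⟩)

theorem exists_linearIndependent_leadIdxSet :
    ∃ f : leadIdxSet b W → W, LinearIndependent k f := by
  choose f hfW hf using fun i : leadIdxSet b W => i.2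
  exact ⟨fun i => ⟨f i, hfW i⟩,
    .of_comp W.subtype (linearIndependent_of_isLeadIdx Subtype.val_injective hf)⟩

instance [FiniteDimensional k W] : Finite (leadIdxSet b W) :=
  let ⟨_, hf⟩ := exists_linearIndependent_leadIdxSet (b := b) (W := W)
  hf.finite

theorem leadCoords_bijective [FiniteDimensional k W] : Bijective (leadCoords b W) := by
  have := Fintype.ofFinite (leadIdxSet b W)
  obtain ⟨f, hf⟩ := exists_linearIndependent_leadIdxSet (b := b) (W := W)
  have hrank : finrank k W = finrank k (leadIdxSet b W → k) :=
    (LinearMap.finrank_le_finrank_of_injective leadCoords_injective).antisymm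
      (by rw [finrank_fintype_fun_eq_card]; exact hf.fintype_card_le_finrank)
  exact ⟨leadCoords_injective,
    (LinearMap.injective_iff_surjective_of_finrank_eq_finrank hrank).mp leadCoords_injective⟩

variable (b W) [FiniteDimensional k W]

noncomputable def leadBasis : Basis (leadIdxSet b W) k W :=
  (Pi.basisFun k (leadIdxSet b W)).map (LinearEquiv.ofBijective _ leadCoords_bijective).symm

variable {b W}

theorem repr_leadBasis (i j : leadIdxSet b W) :
    b.repr (leadBasis b W i) j = Pi.single (M := fun _ => k) i 1 j := by
  rw [← leadCoords_apply, leadBasis, Basis.map_apply, Pi.basisFun_apply]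
  exact congr_fun ((LinearEquiv.ofBijective _ leadCoords_bijective).apply_symm_apply _) j

theorem isLeadIdx_leadBasis (i : leadIdxSet b W) : IsLeadIdx b (leadBasis b W i : V) i := by
  have hi : b.repr (leadBasis b W i) i = 1 := by simpa using repr_leadBasis i i
  obtain ⟨j, hj⟩ := exists_isLeadIdx (b := b) (v := leadBasis b W i) (by
    rintro h
    simp [h] at hi)
  have hj' : j ∈ leadIdxSet b W := ⟨_, (leadBasis b W i).2, hj⟩
  obtain rfl : (⟨j, hj'⟩ : leadIdxSet b W) = i := by
    by_contra hne
    exact hj.repr_ne_zero (by simpa [Pi.single_apply, hne] using repr_leadBasis i ⟨j, hj'⟩)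
  exact hj

theorem linearlySelfReduced_range_leadBasis :
    LinearlySelfReduced b (Set.range fun i => (leadBasis b W i : V)) := by
  refine ⟨fun ⟨i, hi⟩ => (isLeadIdx_leadBasis i).ne_zero hi, ?_, ?_⟩
  · rintro _ ⟨i, rfl⟩ j hj
    rw [← (isLeadIdx_leadBasis i).unique hj]
    simpa using repr_leadBasis i i
  · rintro _ ⟨i, rfl⟩ _ ⟨i', rfl⟩ hne j hj hj'
    obtain rfl := hj'.unique (isLeadIdx_leadBasis i')
    have hi' : i' ≠ i := fun h => hne (h ▸ rfl)
    exact Finsupp.mem_support_iff.mp hj (by simpa [hi'] using repr_leadBasis i i')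

theorem span_range_leadBasis : span k (Set.range fun i => (leadBasis b W i : V)) = W := by
  have hrange : (Set.range fun i => (leadBasis b W i : V)) =
      W.subtype '' Set.range (leadBasis b W) :=
    Set.range_comp W.subtype _
  rw [hrange, span_image, (leadBasis b W).span_eq, map_subtype_top]

variable (b W) in
theorem exists_linearlySelfReduced_span_eq :
    ∃ S : Set V, LinearlySelfReduced b S ∧ span k S = W :=
  ⟨_, linearlySelfReduced_range_leadBasis, span_range_leadBasis⟩

end LeadIdxSet

end

/-- Every finite dimensional subspace of a vector space with a basis indexed by
a (well-)ordered type has a unique linearly self-reduced basis. -/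
theorem existsUnique_linearlySelfReduced_basis {k V ι : Type*} [Field k]
    [AddCommGroup V] [Module k V] [LinearOrder ι] (b : Module.Basis ι k V)
    (W : Submodule k V) (hW : FiniteDimensional k W) :
    ∃! S : Set V, LinearlySelfReduced b S ∧ Submodule.span k S = W ∧
      LinearIndependent k ((↑) : S → V) := by
  obtain ⟨S, hS, hSW⟩ := exists_linearlySelfReduced_span_eq b W
  refine ⟨S, ⟨hS, hSW, hS.linearIndependent⟩, fun T ⟨hT, hTW, _⟩ => ?_⟩
  have hspan : span k T = span k S := hTW.trans hSW.symm
  exact (hT.subset_of_span_eq hS hspan).antisymm (hS.subset_of_span_eq hT hspan.symm)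
end
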